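/- Let $Q = I_1 \times I_2$ be a rectangle in $\mathbb{R}^2$ with sides parallel to the axes, and for $\alpha = (\alpha_1,\alpha_2) \in \mathbb{Z}^2$ let $Q(\alpha)$ be the translate of $Q$ centered at $(|I_1|\alpha_1, |I_2|\alpha_2)$. If $f : \mathbb{R}^2 \to \mathbb{C}$ is smooth with $f$, $\partial_1 f$, $\partial_2 f$, $\partial_2\partial_1 f$ all in $L^2(\mathbb{R}^2)$, then $\sum_{\alpha \in \mathbb{Z}^2} \sup_{Q(\alpha)} |f|^2 \lesssim \frac{|I_1|}{|I_2|}\int |\partial_1 f|^2 + |Q|\int |\partial_2\partial_1 f|^2 + \frac{|I_2|}{|I_1|}\int |\partial_2 f|^2 + \frac{1}{|Q|}\int |f|^2$, with implicit constant independent of $Q$ and $f$. -/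

import Mathlib

open MeasureTheory

/-- First partial derivative of `f : ℝ × ℝ → ℂ`. -/
noncomputable def pd1 (f : ℝ × ℝ → ℂ) : ℝ × ℝ → ℂ :=
  fun p => deriv (fun t => f (t, p.2)) p.1

/-- Second partial derivative of `f : ℝ × ℝ → ℂ`. -/
noncomputable def pd2 (f : ℝ × ℝ → ℂ) : ℝ × ℝ → ℂ :=
  fun p => deriv (fun t => f (p.1, t)) p.2

/-- The translate `Q(α)` of the rectangle with side lengths `L₁, L₂`, centered at
`(L₁ α₁, L₂ α₂)`. -/
def Qtrans (L₁ L₂ : ℝ) (α : ℤ × ℤ) : Set (ℝ × ℝ) :=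
  Set.Ico (L₁ * α.1 - L₁ / 2) (L₁ * α.1 + L₁ / 2) ×ˢ
    Set.Ico (L₂ * α.2 - L₂ / 2) (L₂ * α.2 + L₂ / 2)

open Set intervalIntegral Function

section aux

variable {f : ℝ × ℝ → ℂ}

lemma pd1_eq (hf : ContDiff ℝ (⊤ : ℕ∞) f) : pd1 f = fun p => fderiv ℝ f p (1, 0) := by
  funext p
  have hd : HasDerivAt (fun t : ℝ => (t, p.2)) ((1 : ℝ), (0 : ℝ)) p.1 :=
    (hasDerivAt_id p.1).prodMk (hasDerivAt_const p.1 p.2)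
  have hF : HasFDerivAt f (fderiv ℝ f p) p := (hf.differentiable (by simp) p).hasFDerivAt
  exact (hF.comp_hasDerivAt p.1 hd).deriv

lemma pd2_eq (hf : ContDiff ℝ (⊤ : ℕ∞) f) : pd2 f = fun p => fderiv ℝ f p (0, 1) := by
  funext p
  have hd : HasDerivAt (fun t : ℝ => (p.1, t)) ((0 : ℝ), (1 : ℝ)) p.2 :=
    (hasDerivAt_const p.2 p.1).prodMk (hasDerivAt_id p.2)
  have hF : HasFDerivAt f (fderiv ℝ f p) p := (hf.differentiable (by simp) p).hasFDerivAt
  exact (hF.comp_hasDerivAt p.2 hd).deriv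

lemma contDiff_pd1 (hf : ContDiff ℝ (⊤ : ℕ∞) f) : ContDiff ℝ (⊤ : ℕ∞) (pd1 f) := by
  rw [pd1_eq hf]
  exact (hf.fderiv_right (by simp)).clm_apply contDiff_const

lemma contDiff_pd2 (hf : ContDiff ℝ (⊤ : ℕ∞) f) : ContDiff ℝ (⊤ : ℕ∞) (pd2 f) := by
  rw [pd2_eq hf]
  exact (hf.fderiv_right (by simp)).clm_apply contDiff_const

lemma hasDerivAt_pd1 (hf : ContDiff ℝ (⊤ : ℕ∞) f) (u c : ℝ) :
    HasDerivAt (fun t => f (t, c)) (pd1 f (u, c)) u := by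
  have h : DifferentiableAt ℝ (fun t : ℝ => f (t, c)) u :=
    (hf.differentiable (by simp) (u, c)).comp u
      (differentiableAt_id.prodMk (differentiableAt_const c))
  exact h.hasDerivAt

lemma hasDerivAt_pd2 (hf : ContDiff ℝ (⊤ : ℕ∞) f) (c u : ℝ) :
    HasDerivAt (fun t => f (c, t)) (pd2 f (c, u)) u := by
  have h : DifferentiableAt ℝ (fun t : ℝ => f (c, t)) u :=
    (hf.differentiable (by simp) (c, u)).comp u
      ((differentiableAt_const c).prodMk differentiableAt_id)
  exact h.hasDerivAt

lemma ftc1 (hf : ContDiff ℝ (⊤ : ℕ∞) f) (c x y : ℝ) :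
    ∫ t in y..x, pd1 f (t, c) = f (x, c) - f (y, c) := by
  refine intervalIntegral.integral_eq_sub_of_hasDerivAt (fun u _ => hasDerivAt_pd1 hf u c) ?_
  exact ((contDiff_pd1 hf).continuous.comp
    (continuous_id.prodMk continuous_const)).intervalIntegrable y x

lemma ftc2 (hf : ContDiff ℝ (⊤ : ℕ∞) f) (c x y : ℝ) :
    ∫ s in y..x, pd2 f (c, s) = f (c, x) - f (c, y) := by
  refine intervalIntegral.integral_eq_sub_of_hasDerivAt (fun u _ => hasDerivAt_pd2 hf c u) ?_
  exact ((contDiff_pd2 hf).continuous.comp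
    (continuous_const.prodMk continuous_id)).intervalIntegrable y x

lemma rep (hf : ContDiff ℝ (⊤ : ℕ∞) f) (x y : ℝ × ℝ) :
    f x = f y + (∫ t in y.1..x.1, pd1 f (t, y.2)) + (∫ s in y.2..x.2, pd2 f (y.1, s)) +
      ∫ t in y.1..x.1, ∫ s in y.2..x.2, pd2 (pd1 f) (t, s) := by
  have hpd1 := contDiff_pd1 hf
  have h1 : ∫ t in y.1..x.1, pd1 f (t, x.2) = f (x.1, x.2) - f (y.1, x.2) := ftc1 hf x.2 x.1 y.1
  have h2 : ∫ s in y.2..x.2, pd2 f (y.1, s) = f (y.1, x.2) - f (y.1, y.2) := ftc2 hf y.1 x.2 y.2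
  have h3 : ∀ t : ℝ, ∫ s in y.2..x.2, pd2 (pd1 f) (t, s) = pd1 f (t, x.2) - pd1 f (t, y.2) :=
    fun t => ftc2 hpd1 t x.2 y.2
  have hi1 : IntervalIntegrable (fun t => pd1 f (t, x.2)) volume y.1 x.1 :=
    (hpd1.continuous.comp (continuous_id.prodMk continuous_const)).intervalIntegrable y.1 x.1
  have hi2 : IntervalIntegrable (fun t => pd1 f (t, y.2)) volume y.1 x.1 :=
    (hpd1.continuous.comp (continuous_id.prodMk continuous_const)).intervalIntegrable y.1 x.1
  have h4 : ∫ t in y.1..x.1, ∫ s in y.2..x.2, pd2 (pd1 f) (t, s) =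
      (∫ t in y.1..x.1, pd1 f (t, x.2)) - ∫ t in y.1..x.1, pd1 f (t, y.2) := by
    rw [intervalIntegral.integral_congr (g := fun t => pd1 f (t, x.2) - pd1 f (t, y.2))
      (fun t _ => h3 t)]
    exact intervalIntegral.integral_sub hi1 hi2
  have hx' : f x = f (x.1, x.2) := rfl
  have hy' : f y = f (y.1, y.2) := rfl
  rw [hx', hy', h2, h4, h1]
  ring

lemma norm_intervalIntegral_le {g : ℝ → ℂ} (hg : Continuous g) {a b c d : ℝ}
    (hc : c ∈ Icc a b) (hd : d ∈ Icc a b) :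
    ‖∫ t in c..d, g t‖ ≤ ∫ t in a..b, ‖g t‖ := by
  have hab : a ≤ b := hc.1.trans hc.2
  rw [intervalIntegral.integral_of_le hab]
  have key : ∀ {u v : ℝ}, u ≤ v → u ∈ Icc a b → v ∈ Icc a b →
      ‖∫ t in u..v, g t‖ ≤ ∫ t in Set.Ioc a b, ‖g t‖ := by
    intro u v huv hu hv
    rw [intervalIntegral.integral_of_le huv]
    refine (MeasureTheory.norm_integral_le_integral_norm _).trans ?_
    refine setIntegral_mono_set (hg.norm.integrableOn_Icc.mono_set Ioc_subset_Icc_self)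
      (Filter.Eventually.of_forall fun t => norm_nonneg _) ?_
    exact HasSubset.Subset.eventuallyLE (Ioc_subset_Ioc hu.1 hv.2)
  rcases le_total c d with h | h
  · exact key h hc hd
  · rw [intervalIntegral.integral_symm, norm_neg]
    exact key h hd hc

lemma four_sq (a b c d : ℝ) : (a + b + c + d) ^ 2 ≤ 4 * (a ^ 2 + b ^ 2 + c ^ 2 + d ^ 2) := by
  nlinarith [sq_nonneg (a - b), sq_nonneg (a - c), sq_nonneg (a - d), sq_nonneg (b - c),
    sq_nonneg (b - d), sq_nonneg (c - d)]

lemma cs_aux {α : Type*} [MeasurableSpace α] {μ : Measure α} [IsFiniteMeasure μ]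
    {φ : α → ℝ} (hφ0 : ∀ a, 0 ≤ φ a) (hφ : MemLp φ 2 μ) :
    (∫ a, φ a ∂μ) ^ 2 ≤ (μ Set.univ).toReal * ∫ a, φ a ^ 2 ∂μ := by
  have h2 : (ENNReal.ofReal 2) = 2 := by norm_num
  have hconj : Real.HolderConjugate 2 2 := Real.HolderConjugate.two_two
  have h1 : MemLp (fun _ : α => (1 : ℝ)) (ENNReal.ofReal 2) μ := by
    rw [h2]; exact memLp_const 1
  have key := integral_mul_le_Lp_mul_Lq_of_nonneg hconj
    (Filter.Eventually.of_forall hφ0) (Filter.Eventually.of_forall fun _ => zero_le_one)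
    (h2 ▸ hφ) h1
  have hr : ∀ a, φ a ^ (2 : ℝ) = φ a ^ (2 : ℕ) := fun a => by
    rw [show (2 : ℝ) = ((2 : ℕ) : ℝ) by norm_num, Real.rpow_natCast]
  simp only [mul_one, Real.one_rpow, MeasureTheory.integral_const, smul_eq_mul, measureReal_def, hr] at key
  have hI : (0 : ℝ) ≤ ∫ a, φ a ^ 2 ∂μ := integral_nonneg fun a => sq_nonneg _
  have hm : (0 : ℝ) ≤ (μ Set.univ).toReal := ENNReal.toReal_nonneg
  have h := pow_le_pow_left₀ (integral_nonneg hφ0) key 2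
  have e1 : ((∫ a, φ a ^ 2 ∂μ) ^ ((1 : ℝ) / 2)) ^ (2 : ℕ) = ∫ a, φ a ^ 2 ∂μ := by
    rw [← Real.rpow_natCast (_ ^ ((1 : ℝ) / 2)) 2, ← Real.rpow_mul hI]; norm_num
  have e2 : (((μ Set.univ).toReal) ^ ((1 : ℝ) / 2)) ^ (2 : ℕ) = (μ Set.univ).toReal := by
    rw [← Real.rpow_natCast (_ ^ ((1 : ℝ) / 2)) 2, ← Real.rpow_mul hm]; norm_num
  rw [mul_pow, e1, e2] at h
  linarith [h]

lemma prod_Icc_ae_eq (a₁ b₁ a₂ b₂ : ℝ) :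
    (Icc a₁ b₁ ×ˢ Icc a₂ b₂ : Set (ℝ × ℝ)) =ᵐ[volume] (Ico a₁ b₁ ×ˢ Ico a₂ b₂ : Set (ℝ × ℝ)) := by
  rw [MeasureTheory.ae_eq_set]
  constructor
  · refine measure_mono_null
      (?_ : _ ⊆ ({b₁} ×ˢ (Set.univ : Set ℝ)) ∪ ((Set.univ : Set ℝ) ×ˢ ({b₂} : Set ℝ))) ?_
    · rintro ⟨z1, z2⟩ ⟨⟨⟨h11, h12⟩, h21, h22⟩, hz⟩
      rcases not_and_or.mp (fun h : z1 ∈ Ico a₁ b₁ ∧ z2 ∈ Ico a₂ b₂ => hz ⟨h.1, h.2⟩) with h | h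
      · simp only [mem_Ico, not_and, not_lt] at h
        exact Or.inl ⟨le_antisymm h12 (h h11), trivial⟩
      · simp only [mem_Ico, not_and, not_lt] at h
        exact Or.inr ⟨trivial, le_antisymm h22 (h h21)⟩
    · refine measure_union_null ?_ ?_
      · rw [MeasureTheory.Measure.volume_eq_prod, MeasureTheory.Measure.prod_prod,
          Real.volume_singleton, zero_mul]
      · rw [MeasureTheory.Measure.volume_eq_prod, MeasureTheory.Measure.prod_prod,
          Real.volume_singleton, mul_zero]
  · refine measure_mono_null (?_ : _ ⊆ (∅ : Set (ℝ × ℝ))) measure_empty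
    rintro ⟨z1, z2⟩ ⟨⟨hz1, hz2⟩, hz⟩
    exact hz ⟨Ico_subset_Icc_self hz1, Ico_subset_Icc_self hz2⟩

end aux

section localbound

set_option maxHeartbeats 1000000 in
/-- Local Sobolev-type bound on a closed rectangle. -/
lemma local_bound {f : ℝ × ℝ → ℂ} (hf : ContDiff ℝ (⊤ : ℕ∞) f) {L₁ L₂ : ℝ}
    (hL₁ : 0 < L₁) (hL₂ : 0 < L₂) {a₁ b₁ a₂ b₂ : ℝ}
    (hb₁ : b₁ = a₁ + L₁) (hb₂ : b₂ = a₂ + L₂) {x : ℝ × ℝ}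
    (hx : x ∈ Icc a₁ b₁ ×ˢ Icc a₂ b₂) :
    ‖f x‖ ^ 2 ≤ 4 * (L₁ / L₂ * (∫ z in Icc a₁ b₁ ×ˢ Icc a₂ b₂, ‖pd1 f z‖ ^ 2) +
      L₁ * L₂ * (∫ z in Icc a₁ b₁ ×ˢ Icc a₂ b₂, ‖pd2 (pd1 f) z‖ ^ 2) +
      L₂ / L₁ * (∫ z in Icc a₁ b₁ ×ˢ Icc a₂ b₂, ‖pd2 f z‖ ^ 2) +
      (L₁ * L₂)⁻¹ * (∫ z in Icc a₁ b₁ ×ˢ Icc a₂ b₂, ‖f z‖ ^ 2)) := by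
  have hab₁ : a₁ ≤ b₁ := by rw [hb₁]; linarith
  have hab₂ : a₂ ≤ b₂ := by rw [hb₂]; linarith
  set K : Set (ℝ × ℝ) := Icc a₁ b₁ ×ˢ Icc a₂ b₂ with hK
  have hKc : IsCompact K := isCompact_Icc.prod isCompact_Icc
  have hKm : MeasurableSet K := measurableSet_Icc.prod measurableSet_Icc
  set μ₁ : Measure ℝ := volume.restrict (Icc a₁ b₁) with hμ₁
  set μ₂ : Measure ℝ := volume.restrict (Icc a₂ b₂) with hμ₂
  set π : Measure (ℝ × ℝ) := μ₁.prod μ₂ with hπdef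
  have hπ : (volume : Measure (ℝ × ℝ)).restrict K = π := by
    rw [hπdef, hμ₁, hμ₂, MeasureTheory.Measure.prod_restrict, ← Measure.volume_eq_prod]
  haveI hfin₁ : IsFiniteMeasure μ₁ :=
    ⟨by rw [hμ₁, Measure.restrict_apply_univ]; exact isCompact_Icc.measure_lt_top⟩
  haveI hfin₂ : IsFiniteMeasure μ₂ :=
    ⟨by rw [hμ₂, Measure.restrict_apply_univ]; exact isCompact_Icc.measure_lt_top⟩
  haveI hfinπ : IsFiniteMeasure π := by
    constructor
    rw [← hπ, Measure.restrict_apply_univ]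
    exact hKc.measure_lt_top
  -- continuity facts
  have hcf : Continuous f := hf.continuous
  have hc1 : Continuous (pd1 f) := (contDiff_pd1 hf).continuous
  have hc2 : Continuous (pd2 f) := (contDiff_pd2 hf).continuous
  have hc21 : Continuous (pd2 (pd1 f)) := (contDiff_pd2 (contDiff_pd1 hf)).continuous
  -- integrability wrt π of continuous functions
  have intπ : ∀ {g : ℝ × ℝ → ℝ}, Continuous g → Integrable g π := by
    intro g hg
    rw [← hπ]
    exact hg.continuousOn.integrableOn_compact hKc
  have memπ : ∀ {g : ℝ × ℝ → ℝ}, Continuous g → MemLp g 2 π := by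
    intro g hg
    rw [← hπ]
    obtain ⟨M, hM⟩ := hKc.exists_bound_of_continuousOn hg.continuousOn
    haveI : IsFiniteMeasure (volume.restrict K) :=
      ⟨by rw [Measure.restrict_apply_univ]; exact hKc.measure_lt_top⟩
    exact MemLp.of_bound hg.aestronglyMeasurable M ((ae_restrict_mem hKm).mono hM)
  -- volume of K
  have hvol : (π Set.univ).toReal = L₁ * L₂ := by
    rw [← Set.univ_prod_univ, hπdef, MeasureTheory.Measure.prod_prod, hμ₁, hμ₂,
      Measure.restrict_apply_univ, Measure.restrict_apply_univ, Real.volume_Icc,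
      Real.volume_Icc, ← ENNReal.ofReal_mul (by linarith), ENNReal.toReal_ofReal
      (by nlinarith), hb₁, hb₂]
    ring_nf
  -- the three averaged quantities
  set Ix : ℝ → ℝ := fun u => ∫ t in a₁..b₁, ‖pd1 f (t, u)‖ with hIx
  set Iy : ℝ → ℝ := fun v => ∫ s in a₂..b₂, ‖pd2 f (v, s)‖ with hIy
  set D : ℝ := ∫ t in a₁..b₁, ∫ s in a₂..b₂, ‖pd2 (pd1 f) (t, s)‖ with hD
  have hIxc : Continuous Ix :=
    intervalIntegral.continuous_parametric_intervalIntegral_of_continuous'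
      (f := fun u t => ‖pd1 f (t, u)‖)
      ((hc1.comp (continuous_snd.prodMk continuous_fst)).norm) a₁ b₁
  have hIyc : Continuous Iy :=
    intervalIntegral.continuous_parametric_intervalIntegral_of_continuous'
      (f := fun v s => ‖pd2 f (v, s)‖)
      ((hc2.comp (continuous_fst.prodMk continuous_snd)).norm) a₂ b₂
  set H : ℝ × ℝ → ℝ := fun y => ‖f y‖ + Ix y.2 + Iy y.1 with hH
  have hHc : Continuous H := by
    refine (hcf.norm.add (hIxc.comp continuous_snd)).add (hIyc.comp continuous_fst)
  -- minimum of H on K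
  obtain ⟨y₀, hy₀K, hy₀⟩ := hKc.exists_isMinOn
    ⟨(a₁, a₂), ⟨⟨le_refl _, hab₁⟩, ⟨le_refl _, hab₂⟩⟩⟩ hHc.continuousOn
  -- pointwise bound: ‖f x‖ ≤ H y₀ + D
  have hgcont : Continuous (fun t => ∫ s in y₀.2..x.2, pd2 (pd1 f) (t, s)) :=
    intervalIntegral.continuous_parametric_intervalIntegral_of_continuous'
      (f := fun t s => pd2 (pd1 f) (t, s))
      (hc21.comp (continuous_fst.prodMk continuous_snd)) y₀.2 x.2
  have hx1 : x.1 ∈ Icc a₁ b₁ := hx.1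
  have hx2 : x.2 ∈ Icc a₂ b₂ := hx.2
  have hy1 : y₀.1 ∈ Icc a₁ b₁ := hy₀K.1
  have hy2 : y₀.2 ∈ Icc a₂ b₂ := hy₀K.2
  have hstep6 : ‖f x‖ ≤ H y₀ + D := by
    have hrep := rep hf x y₀
    have hn1 : ‖∫ t in y₀.1..x.1, pd1 f (t, y₀.2)‖ ≤ Ix y₀.2 :=
      norm_intervalIntegral_le (hc1.comp (continuous_id.prodMk continuous_const)) hy1 hx1
    have hn2 : ‖∫ s in y₀.2..x.2, pd2 f (y₀.1, s)‖ ≤ Iy y₀.1 :=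
      norm_intervalIntegral_le (hc2.comp (continuous_const.prodMk continuous_id)) hy2 hx2
    have hn3 : ‖∫ t in y₀.1..x.1, ∫ s in y₀.2..x.2, pd2 (pd1 f) (t, s)‖ ≤ D := by
      refine (norm_intervalIntegral_le hgcont hy1 hx1).trans ?_
      rw [hD]
      refine intervalIntegral.integral_mono_on hab₁ (hgcont.norm.intervalIntegrable a₁ b₁)
        ((intervalIntegral.continuous_parametric_intervalIntegral_of_continuous'
          (f := fun t s => ‖pd2 (pd1 f) (t, s)‖)
          ((hc21.comp (continuous_fst.prodMk continuous_snd)).norm) a₂ b₂).intervalIntegrable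
          a₁ b₁) ?_
      intro t _
      exact norm_intervalIntegral_le (hc21.comp (continuous_const.prodMk continuous_id))
        hy2 hx2
    calc ‖f x‖ = ‖f y₀ + (∫ t in y₀.1..x.1, pd1 f (t, y₀.2)) +
          (∫ s in y₀.2..x.2, pd2 f (y₀.1, s)) +
          ∫ t in y₀.1..x.1, ∫ s in y₀.2..x.2, pd2 (pd1 f) (t, s)‖ := by rw [← hrep]
      _ ≤ ‖f y₀ + (∫ t in y₀.1..x.1, pd1 f (t, y₀.2)) +
          (∫ s in y₀.2..x.2, pd2 f (y₀.1, s))‖ +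
          ‖∫ t in y₀.1..x.1, ∫ s in y₀.2..x.2, pd2 (pd1 f) (t, s)‖ := norm_add_le _ _
      _ ≤ (‖f y₀ + (∫ t in y₀.1..x.1, pd1 f (t, y₀.2))‖ +
          ‖∫ s in y₀.2..x.2, pd2 f (y₀.1, s)‖) +
          ‖∫ t in y₀.1..x.1, ∫ s in y₀.2..x.2, pd2 (pd1 f) (t, s)‖ :=
        add_le_add_left (norm_add_le _ _) _
      _ ≤ ((‖f y₀‖ + ‖∫ t in y₀.1..x.1, pd1 f (t, y₀.2)‖) +
          ‖∫ s in y₀.2..x.2, pd2 f (y₀.1, s)‖) +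
          ‖∫ t in y₀.1..x.1, ∫ s in y₀.2..x.2, pd2 (pd1 f) (t, s)‖ :=
        add_le_add_left (add_le_add_left (norm_add_le _ _) _) _
      _ ≤ ‖f y₀‖ + Ix y₀.2 + Iy y₀.1 + D :=
        add_le_add (add_le_add (add_le_add le_rfl hn1) hn2) hn3
      _ = H y₀ + D := by rw [hH]
  -- averaged quantities
  set A : ℝ := ∫ z, ‖f z‖ ∂π with hA
  set B : ℝ := ∫ z, ‖pd1 f z‖ ∂π with hB
  set Cq : ℝ := ∫ z, ‖pd2 f z‖ ∂π with hCq
  -- interval integrals as μ integrals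
  have hμint₁ : ∀ (g : ℝ → ℝ), ∫ t in a₁..b₁, g t = ∫ t, g t ∂μ₁ := by
    intro g
    rw [intervalIntegral.integral_of_le hab₁, hμ₁, ← MeasureTheory.integral_Icc_eq_integral_Ioc]
  have hμint₂ : ∀ (g : ℝ → ℝ), ∫ s in a₂..b₂, g s = ∫ s, g s ∂μ₂ := by
    intro g
    rw [intervalIntegral.integral_of_le hab₂, hμ₂, ← MeasureTheory.integral_Icc_eq_integral_Ioc]
  have hμ₁univ : (μ₁ Set.univ).toReal = L₁ := by
    rw [hμ₁, Measure.restrict_apply_univ, Real.volume_Icc, ENNReal.toReal_ofReal (by linarith),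
      hb₁]; ring
  have hμ₂univ : (μ₂ Set.univ).toReal = L₂ := by
    rw [hμ₂, Measure.restrict_apply_univ, Real.volume_Icc, ENNReal.toReal_ofReal (by linarith),
      hb₂]; ring
  -- ∫ Ix ∘ snd = L₁ * B
  have hIxint : ∫ y, Ix y.2 ∂π = L₁ * B := by
    have h1 : ∫ y, Ix y.2 ∂π = ∫ y₁, ∫ y₂, Ix y₂ ∂μ₂ ∂μ₁ :=
      MeasureTheory.integral_prod _ (intπ (hIxc.comp continuous_snd))
    have hswap : ∫ u, ∫ t, ‖pd1 f (t, u)‖ ∂μ₁ ∂μ₂ = ∫ t, ∫ u, ‖pd1 f (t, u)‖ ∂μ₂ ∂μ₁ := by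
      refine MeasureTheory.integral_integral_swap ?_
      have he : (volume : Measure (ℝ × ℝ)).restrict (Icc a₂ b₂ ×ˢ Icc a₁ b₁) = μ₂.prod μ₁ := by
        rw [hμ₁, hμ₂, MeasureTheory.Measure.prod_restrict, ← Measure.volume_eq_prod]
      rw [← he]
      exact ((hc1.comp (continuous_snd.prodMk continuous_fst)).norm).continuousOn.integrableOn_compact
        (isCompact_Icc.prod isCompact_Icc)
    have h2 : ∫ y₂, Ix y₂ ∂μ₂ = B := by
      rw [hB, MeasureTheory.integral_prod _ (intπ hc1.norm)]
      rw [hIx]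
      simp only [hμint₁]
      exact hswap
    rw [h1]
    simp only [h2, MeasureTheory.integral_const, smul_eq_mul, measureReal_def, hμ₁univ]
  -- ∫ Iy ∘ fst = L₂ * Cq
  have hIyint : ∫ y, Iy y.1 ∂π = L₂ * Cq := by
    have h1 : ∫ y, Iy y.1 ∂π = ∫ y₁, ∫ y₂, Iy y₁ ∂μ₂ ∂μ₁ :=
      MeasureTheory.integral_prod _ (intπ (hIyc.comp continuous_fst))
    have h2 : Cq = ∫ y₁, Iy y₁ ∂μ₁ := by
      rw [hCq, MeasureTheory.integral_prod _ (intπ hc2.norm), hIy]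
      simp only [hμint₂]
    rw [h1, h2]
    simp only [MeasureTheory.integral_const, smul_eq_mul, measureReal_def]
    rw [← MeasureTheory.integral_const_mul]
    congr 1
    funext y₁
    rw [hμ₂univ]
  -- D = ∫ ‖pd2 (pd1 f)‖ dπ
  have hDint : D = ∫ z, ‖pd2 (pd1 f) z‖ ∂π := by
    rw [hD, MeasureTheory.integral_prod _ (intπ hc21.norm)]
    simp only [hμint₂]
    rw [hμint₁]
  -- average bound
  have hHint : Integrable H π := intπ hHc
  have i1 : Integrable (fun y : ℝ × ℝ => ‖f y‖) π := intπ hcf.norm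
  have i2 : Integrable (fun y : ℝ × ℝ => Ix y.2) π := intπ (hIxc.comp continuous_snd)
  have i3 : Integrable (fun y : ℝ × ℝ => Iy y.1) π := intπ (hIyc.comp continuous_fst)
  have i12 : Integrable (fun y : ℝ × ℝ => ‖f y‖ + Ix y.2) π :=
    intπ (hcf.norm.add (hIxc.comp continuous_snd))
  have havg : L₁ * L₂ * H y₀ ≤ A + L₁ * B + L₂ * Cq := by
    have hae : ∀ᵐ y ∂π, y ∈ K := by rw [← hπ]; exact ae_restrict_mem hKm
    have h1 : ∫ (_ : ℝ × ℝ), H y₀ ∂π ≤ ∫ y, H y ∂π :=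
      integral_mono_ae (integrable_const _) hHint (hae.mono fun y hy => hy₀ hy)
    rw [MeasureTheory.integral_const, smul_eq_mul, measureReal_def, hvol] at h1
    have h2 : ∫ y, H y ∂π = A + L₁ * B + L₂ * Cq := by
      calc ∫ y, H y ∂π = ∫ y, ((‖f y‖ + Ix y.2) + Iy y.1) ∂π := rfl
        _ = (∫ y, (‖f y‖ + Ix y.2) ∂π) + ∫ y, Iy y.1 ∂π :=
          MeasureTheory.integral_add i12 i3
        _ = ((∫ y, ‖f y‖ ∂π) + ∫ y, Ix y.2 ∂π) + ∫ y, Iy y.1 ∂π := by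
          rw [MeasureTheory.integral_add i1 i2]
        _ = A + L₁ * B + L₂ * Cq := by rw [hIxint, hIyint, ← hA]
    linarith [h1, h2.le, h2.ge]
  -- Cauchy–Schwarz bounds
  have hcsA : A ^ 2 ≤ L₁ * L₂ * ∫ z, ‖f z‖ ^ 2 ∂π := by
    rw [hA, ← hvol]
    exact cs_aux (fun z => norm_nonneg (f z)) (memπ hcf.norm)
  have hcsB : B ^ 2 ≤ L₁ * L₂ * ∫ z, ‖pd1 f z‖ ^ 2 ∂π := by
    rw [hB, ← hvol]
    exact cs_aux (fun z => norm_nonneg (pd1 f z)) (memπ hc1.norm)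
  have hcsC : Cq ^ 2 ≤ L₁ * L₂ * ∫ z, ‖pd2 f z‖ ^ 2 ∂π := by
    rw [hCq, ← hvol]
    exact cs_aux (fun z => norm_nonneg (pd2 f z)) (memπ hc2.norm)
  have hcsD : D ^ 2 ≤ L₁ * L₂ * ∫ z, ‖pd2 (pd1 f) z‖ ^ 2 ∂π := by
    rw [hDint, ← hvol]
    exact cs_aux (fun z => norm_nonneg (pd2 (pd1 f) z)) (memπ hc21.norm)
  -- nonnegativity
  have hA0 : 0 ≤ A := by rw [hA]; exact integral_nonneg fun z => norm_nonneg _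
  have hB0 : 0 ≤ B := by rw [hB]; exact integral_nonneg fun z => norm_nonneg _
  have hC0 : 0 ≤ Cq := by rw [hCq]; exact integral_nonneg fun z => norm_nonneg _
  have hD0 : 0 ≤ D := by rw [hDint]; exact integral_nonneg fun z => norm_nonneg _
  have hpos : (0 : ℝ) < L₁ * L₂ := mul_pos hL₁ hL₂
  -- combine
  have h7 : H y₀ ≤ A / (L₁ * L₂) + B / L₂ + Cq / L₁ := by
    rw [← mul_le_mul_iff_right₀ hpos]
    calc L₁ * L₂ * H y₀ ≤ A + L₁ * B + L₂ * Cq := havg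
      _ = L₁ * L₂ * (A / (L₁ * L₂) + B / L₂ + Cq / L₁) := by field_simp
  have hsum : ‖f x‖ ≤ A / (L₁ * L₂) + B / L₂ + Cq / L₁ + D :=
    hstep6.trans (add_le_add_left h7 D)
  have ha2 : (A / (L₁ * L₂)) ^ 2 ≤ (L₁ * L₂)⁻¹ * ∫ z, ‖f z‖ ^ 2 ∂π := by
    rw [div_pow, div_le_iff₀ (by positivity : (0 : ℝ) < (L₁ * L₂) ^ 2)]
    calc A ^ 2 ≤ L₁ * L₂ * ∫ z, ‖f z‖ ^ 2 ∂π := hcsA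
      _ = (L₁ * L₂)⁻¹ * (∫ z, ‖f z‖ ^ 2 ∂π) * (L₁ * L₂) ^ 2 := by field_simp
  have hb2 : (B / L₂) ^ 2 ≤ L₁ / L₂ * ∫ z, ‖pd1 f z‖ ^ 2 ∂π := by
    rw [div_pow, div_le_iff₀ (by positivity : (0 : ℝ) < L₂ ^ 2)]
    calc B ^ 2 ≤ L₁ * L₂ * ∫ z, ‖pd1 f z‖ ^ 2 ∂π := hcsB
      _ = L₁ / L₂ * (∫ z, ‖pd1 f z‖ ^ 2 ∂π) * L₂ ^ 2 := by field_simp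
  have hcq2 : (Cq / L₁) ^ 2 ≤ L₂ / L₁ * ∫ z, ‖pd2 f z‖ ^ 2 ∂π := by
    rw [div_pow, div_le_iff₀ (by positivity : (0 : ℝ) < L₁ ^ 2)]
    calc Cq ^ 2 ≤ L₁ * L₂ * ∫ z, ‖pd2 f z‖ ^ 2 ∂π := hcsC
      _ = L₂ / L₁ * (∫ z, ‖pd2 f z‖ ^ 2 ∂π) * L₁ ^ 2 := by field_simp
  have hd2 : D ^ 2 ≤ L₁ * L₂ * ∫ z, ‖pd2 (pd1 f) z‖ ^ 2 ∂π := hcsD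
  have hfx2 : ‖f x‖ ^ 2 ≤ (A / (L₁ * L₂) + B / L₂ + Cq / L₁ + D) ^ 2 :=
    pow_le_pow_left₀ (norm_nonneg _) hsum 2
  have hquad : (A / (L₁ * L₂) + B / L₂ + Cq / L₁ + D) ^ 2 ≤
      4 * ((A / (L₁ * L₂)) ^ 2 + (B / L₂) ^ 2 + (Cq / L₁) ^ 2 + D ^ 2) :=
    four_sq _ _ _ _
  -- convert set integrals in the goal to π-integrals
  rw [hπ]
  calc ‖f x‖ ^ 2 ≤ 4 * ((A / (L₁ * L₂)) ^ 2 + (B / L₂) ^ 2 + (Cq / L₁) ^ 2 + D ^ 2) :=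
        hfx2.trans hquad
    _ ≤ 4 * (L₁ / L₂ * (∫ z, ‖pd1 f z‖ ^ 2 ∂π) + L₁ * L₂ * (∫ z, ‖pd2 (pd1 f) z‖ ^ 2 ∂π) +
        L₂ / L₁ * (∫ z, ‖pd2 f z‖ ^ 2 ∂π) + (L₁ * L₂)⁻¹ * (∫ z, ‖f z‖ ^ 2 ∂π)) := by
        linarith [ha2, hb2, hcq2, hd2]

end localbound

/-- Sledd–Stegenga type lemma in dimension two: for a rectangle `Q = I₁ × I₂` with side
lengths `L₁, L₂` and lattice translates `Q(α)`, `α ∈ ℤ²`, and a smooth `f : ℝ² → ℂ` with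
`f, ∂₁f, ∂₂f, ∂₂∂₁f ∈ L²(ℝ²)`,
`∑_{α} sup_{Q(α)} |f|² ≲ (L₁/L₂)∫|∂₁f|² + L₁L₂ ∫|∂₂∂₁f|² + (L₂/L₁)∫|∂₂f|² + (L₁L₂)⁻¹∫|f|²`,
with implicit constant independent of the rectangle and of `f`. -/
theorem stmt_2 :
    ∃ C : ℝ, 0 < C ∧ ∀ (L₁ L₂ : ℝ), 0 < L₁ → 0 < L₂ → ∀ f : ℝ × ℝ → ℂ, ContDiff ℝ (⊤ : ℕ∞) f →
      MemLp f 2 volume → MemLp (pd1 f) 2 volume → MemLp (pd2 f) 2 volume →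
      MemLp (pd2 (pd1 f)) 2 volume →
      ∑' α : ℤ × ℤ, ⨆ x ∈ Qtrans L₁ L₂ α, ‖f x‖ ^ 2 ≤
        C * (L₁ / L₂ * (∫ x, ‖pd1 f x‖ ^ 2) + L₁ * L₂ * (∫ x, ‖pd2 (pd1 f) x‖ ^ 2) +
          L₂ / L₁ * (∫ x, ‖pd2 f x‖ ^ 2) + (L₁ * L₂)⁻¹ * ∫ x, ‖f x‖ ^ 2) := by
  refine ⟨4, by norm_num, fun L₁ L₂ hL₁ hL₂ f hf hf0 hf1 hf2 hf3 => ?_⟩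
  -- integrability of the squares
  have sqInt : ∀ {g : ℝ × ℝ → ℂ}, MemLp g 2 volume →
      Integrable (fun x => ‖g x‖ ^ 2) volume := by
    intro g hg
    have h := hg.integrable_norm_rpow two_ne_zero ENNReal.ofNat_ne_top
    have ht : (2 : ENNReal).toReal = (2 : ℝ) := by norm_num
    rw [ht] at h
    have e : (fun x => ‖g x‖ ^ (2 : ℝ)) = fun x => ‖g x‖ ^ (2 : ℕ) := by
      funext x
      rw [show (2 : ℝ) = ((2 : ℕ) : ℝ) by norm_num, Real.rpow_natCast]
    rwa [e] at h
  -- the tiles are measurable, disjoint and cover the plane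
  have hmeas : ∀ α : ℤ × ℤ, MeasurableSet (Qtrans L₁ L₂ α) := fun α =>
    measurableSet_Ico.prod measurableSet_Ico
  have key1d : ∀ (L : ℝ), 0 < L → ∀ (k k' : ℤ) (u : ℝ),
      u ∈ Ico (L * k - L / 2) (L * k + L / 2) → u ∈ Ico (L * k' - L / 2) (L * k' + L / 2) →
      k = k' := by
    intro L hL k k' u hk hk'
    obtain ⟨h1, h2⟩ := hk
    obtain ⟨h3, h4⟩ := hk'
    have h5 : ((k : ℝ) - k') < 1 := by
      have : L * ((k : ℝ) - k') < L * 1 := by nlinarith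
      exact lt_of_mul_lt_mul_left this hL.le
    have h6 : ((k' : ℝ) - k) < 1 := by
      have : L * ((k' : ℝ) - k) < L * 1 := by nlinarith
      exact lt_of_mul_lt_mul_left this hL.le
    have l1 : (k : ℤ) - k' < 1 := by exact_mod_cast h5
    have l2 : (k' : ℤ) - k < 1 := by exact_mod_cast h6
    omega
  have hdisj : Pairwise (Disjoint on Qtrans L₁ L₂) := by
    intro α β hne
    rw [Function.onFun, Set.disjoint_left]
    rintro ⟨u, v⟩ hu hv
    exact hne (Prod.ext (key1d L₁ hL₁ _ _ u hu.1 hv.1) (key1d L₂ hL₂ _ _ v hu.2 hv.2))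
  have hcov : ⋃ α : ℤ × ℤ, Qtrans L₁ L₂ α = Set.univ := by
    ext z
    simp only [Set.mem_iUnion, Set.mem_univ, iff_true]
    have mk : ∀ (L : ℝ), 0 < L → ∀ u : ℝ, ∃ k : ℤ,
        u ∈ Ico (L * k - L / 2) (L * k + L / 2) := by
      intro L hL u
      refine ⟨⌊u / L + 1 / 2⌋, ?_, ?_⟩
      · have h1 : (⌊u / L + 1 / 2⌋ : ℝ) ≤ u / L + 1 / 2 := Int.floor_le _
        have h3 : u / L * L = u := div_mul_cancel₀ u hL.ne'
        have h4 := mul_le_mul_of_nonneg_right h1 hL.le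
        nlinarith
      · have h2 : u / L + 1 / 2 < ⌊u / L + 1 / 2⌋ + 1 := Int.lt_floor_add_one _
        have h3 : u / L * L = u := div_mul_cancel₀ u hL.ne'
        have h4 := mul_le_mul_of_nonneg_right h2.le hL.le
        nlinarith
    obtain ⟨k1, hk1⟩ := mk L₁ hL₁ z.1
    obtain ⟨k2, hk2⟩ := mk L₂ hL₂ z.2
    exact ⟨(k1, k2), hk1, hk2⟩
  -- sums of tile integrals
  have hs : ∀ (g : ℝ × ℝ → ℝ), Integrable g volume →
      HasSum (fun α : ℤ × ℤ => ∫ x in Qtrans L₁ L₂ α, g x) (∫ x, g x) := by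
    intro g hg
    have h := MeasureTheory.hasSum_integral_iUnion hmeas hdisj
      (by rw [hcov]; exact hg.integrableOn)
    rwa [hcov, MeasureTheory.setIntegral_univ] at h
  have h0 := hs (fun x => ‖f x‖ ^ 2) (sqInt hf0)
  have h1 := hs (fun x => ‖pd1 f x‖ ^ 2) (sqInt hf1)
  have h2 := hs (fun x => ‖pd2 f x‖ ^ 2) (sqInt hf2)
  have h3 := hs (fun x => ‖pd2 (pd1 f) x‖ ^ 2) (sqInt hf3)
  set u : ℤ × ℤ → ℝ := fun α =>
    4 * (L₁ / L₂ * (∫ x in Qtrans L₁ L₂ α, ‖pd1 f x‖ ^ 2) +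
      L₁ * L₂ * (∫ x in Qtrans L₁ L₂ α, ‖pd2 (pd1 f) x‖ ^ 2) +
      L₂ / L₁ * (∫ x in Qtrans L₁ L₂ α, ‖pd2 f x‖ ^ 2) +
      (L₁ * L₂)⁻¹ * (∫ x in Qtrans L₁ L₂ α, ‖f x‖ ^ 2)) with hudef
  have hu : HasSum u (4 * (L₁ / L₂ * (∫ x, ‖pd1 f x‖ ^ 2) +
      L₁ * L₂ * (∫ x, ‖pd2 (pd1 f) x‖ ^ 2) + L₂ / L₁ * (∫ x, ‖pd2 f x‖ ^ 2) +
      (L₁ * L₂)⁻¹ * ∫ x, ‖f x‖ ^ 2)) :=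
    ((((h1.mul_left (L₁ / L₂)).add (h3.mul_left (L₁ * L₂))).add
      (h2.mul_left (L₂ / L₁))).add (h0.mul_left (L₁ * L₂)⁻¹)).mul_left 4
  -- per-tile bound
  have hb : ∀ α : ℤ × ℤ, (⨆ x ∈ Qtrans L₁ L₂ α, ‖f x‖ ^ 2) ≤ u α := by
    intro α
    have t0 : 0 ≤ ∫ x in Qtrans L₁ L₂ α, ‖f x‖ ^ 2 :=
      setIntegral_nonneg (hmeas α) fun x _ => sq_nonneg _
    have t1 : 0 ≤ ∫ x in Qtrans L₁ L₂ α, ‖pd1 f x‖ ^ 2 :=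
      setIntegral_nonneg (hmeas α) fun x _ => sq_nonneg _
    have t2 : 0 ≤ ∫ x in Qtrans L₁ L₂ α, ‖pd2 f x‖ ^ 2 :=
      setIntegral_nonneg (hmeas α) fun x _ => sq_nonneg _
    have t3 : 0 ≤ ∫ x in Qtrans L₁ L₂ α, ‖pd2 (pd1 f) x‖ ^ 2 :=
      setIntegral_nonneg (hmeas α) fun x _ => sq_nonneg _
    have hu0 : 0 ≤ u α := by
      rw [hudef]
      have c1 : 0 ≤ L₁ / L₂ := le_of_lt (div_pos hL₁ hL₂)
      have c2 : 0 ≤ L₁ * L₂ := le_of_lt (mul_pos hL₁ hL₂)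
      have c3 : 0 ≤ L₂ / L₁ := le_of_lt (div_pos hL₂ hL₁)
      have c4 : 0 ≤ (L₁ * L₂)⁻¹ := inv_nonneg.mpr c2
      have := mul_nonneg c1 t1
      have := mul_nonneg c2 t3
      have := mul_nonneg c3 t2
      have := mul_nonneg c4 t0
      linarith
    refine Real.iSup_le (fun z => Real.iSup_le (fun hz => ?_) hu0) hu0
    have hzK : z ∈ Icc (L₁ * α.1 - L₁ / 2) (L₁ * α.1 + L₁ / 2) ×ˢ
        Icc (L₂ * α.2 - L₂ / 2) (L₂ * α.2 + L₂ / 2) :=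
      ⟨Ico_subset_Icc_self hz.1, Ico_subset_Icc_self hz.2⟩
    have hlb := local_bound hf hL₁ hL₂
      (show L₁ * α.1 + L₁ / 2 = (L₁ * α.1 - L₁ / 2) + L₁ by ring)
      (show L₂ * α.2 + L₂ / 2 = (L₂ * α.2 - L₂ / 2) + L₂ by ring) hzK
    have hconv : ∀ (g : ℝ × ℝ → ℝ),
        ∫ w in Icc (L₁ * α.1 - L₁ / 2) (L₁ * α.1 + L₁ / 2) ×ˢ
          Icc (L₂ * α.2 - L₂ / 2) (L₂ * α.2 + L₂ / 2), g w =
        ∫ w in Qtrans L₁ L₂ α, g w := fun g =>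
      setIntegral_congr_set (prod_Icc_ae_eq _ _ _ _)
    rw [hconv, hconv, hconv, hconv] at hlb
    rw [hudef]
    exact hlb
  -- summing up
  have hS0 : ∀ α : ℤ × ℤ, 0 ≤ ⨆ x ∈ Qtrans L₁ L₂ α, ‖f x‖ ^ 2 := fun α =>
    Real.iSup_nonneg fun z => Real.iSup_nonneg fun _ => sq_nonneg _
  have hSsum : Summable (fun α : ℤ × ℤ => ⨆ x ∈ Qtrans L₁ L₂ α, ‖f x‖ ^ 2) :=
    Summable.of_nonneg_of_le hS0 hb hu.summable
  calc ∑' α : ℤ × ℤ, ⨆ x ∈ Qtrans L₁ L₂ α, ‖f x‖ ^ 2 ≤ ∑' α, u α :=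
        Summable.tsum_le_tsum hb hSsum hu.summable
    _ = 4 * (L₁ / L₂ * (∫ x, ‖pd1 f x‖ ^ 2) + L₁ * L₂ * (∫ x, ‖pd2 (pd1 f) x‖ ^ 2) +
        L₂ / L₁ * (∫ x, ‖pd2 f x‖ ^ 2) + (L₁ * L₂)⁻¹ * ∫ x, ‖f x‖ ^ 2) := hu.tsum_eq
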